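/- arXiv:2507.05569 — 4 statements merged into one kernel-verified Lean document; each statement's English description precedes it below -/
import Mathlib

section
/- If v is at hop-distance i ≥ 1 from s in the disk graph and u is a nearest neighbor of v in S_{i−1} under weighted distance (u = argmin_{w ∈ S_{i−1}} d_w(v)), then the disk graph has an edge between u and v. -/
/-- If `v` is at hop-distance `i ≥ 1` from `s` and `u` is a weighted nearest
neighbor of `v` in `S_{i−1}`, then the disk graph has an edge `(u, v)`. -/
theorem stmt_3 {V : Type*} [Fintype V]
    (pos : V → EuclideanSpace ℝ (Fin 2)) (hinj : Function.Injective pos)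
    (r : V → ℝ) (hr : ∀ x, 0 ≤ r x)
    (G : SimpleGraph V)
    (hG : ∀ x y, G.Adj x y ↔ x ≠ y ∧ dist (pos x) (pos y) ≤ r x + r y)
    (s : V) (i : ℕ) (hi : 1 ≤ i) (v u : V)
    (hv : G.Reachable s v ∧ G.dist s v = i)
    (hu : G.Reachable s u ∧ G.dist s u = i - 1)
    (hmin : ∀ w : V, (G.Reachable s w ∧ G.dist s w = i - 1) →
      dist (pos u) (pos v) - r u ≤ dist (pos w) (pos v) - r w) :
    G.Adj u v := by
  obtain ⟨hvr, hvd⟩ := hv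
  -- get a shortest walk from s to v
  obtain ⟨p, hp⟩ := hvr.exists_walk_length_eq_dist
  -- look at the last edge via the reverse walk
  cases hq : p.reverse with
  | nil =>
      exfalso
      have : p.length = 0 := by
        have := congrArg SimpleGraph.Walk.length hq
        simpa using this
      omega
  | cons hadj q =>
      rename_i w
      -- hadj : G.Adj v w, q : G.Walk w s
      have hqlen : q.length = i - 1 := by
        have := congrArg SimpleGraph.Walk.length hq
        simp [SimpleGraph.Walk.length_reverse] at this
        omega
      have hwr : G.Reachable s w := ⟨q.reverse⟩
      have hle : G.dist s w ≤ i - 1 := by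
        have := G.dist_le q.reverse
        simpa [hqlen] using this
      have hge : i - 1 ≤ G.dist s w := by
        obtain ⟨q', hq'⟩ := hwr.exists_walk_length_eq_dist
        have : G.dist s v ≤ (q'.concat hadj.symm).length := G.dist_le _
        rw [SimpleGraph.Walk.length_concat, hq', hvd] at this
        omega
      have hwd : G.dist s w = i - 1 := le_antisymm hle hge
      have hwv : dist (pos w) (pos v) ≤ r w + r v := ((hG w v).1 hadj.symm).2
      have hkey := hmin w ⟨hwr, hwd⟩
      have hneq : u ≠ v := by
        intro h
        rw [h] at hu
        omega
      rw [hG]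
      refine ⟨hneq, ?_⟩
      linarith
end

section
/- Let u, v, w be sites and p a point on the segment uv satisfying d_w(p) ≤ d_v(p) (p is at least as close to w as to v in weighted distance). If the disk graph has an edge (u, v), i.e., d_v(u) ≤ r_u, then d_w(u) ≤ r_u, so the disk graph also has an edge (u, w). -/
/-- If `p` is on segment `uv` with `d_w(p) ≤ d_v(p)`, and the disk graph has an
edge `(u,v)` (i.e. `d_v(u) ≤ ru`), then `d_w(u) ≤ ru`, hence the edge `(u,w)`
exists (`|uw| ≤ ru + rw`). -/
theorem stmt_4 (u v w p : EuclideanSpace ℝ (Fin 2)) (ru rv rw : ℝ)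
    (hru : 0 ≤ ru) (hrv : 0 ≤ rv) (hrw : 0 ≤ rw)
    (hp : p ∈ segment ℝ u v)
    (hwp : dist w p - rw ≤ dist v p - rv)
    (hedge : dist v u - rv ≤ ru) :
    dist w u - rw ≤ ru ∧ dist u w ≤ ru + rw := by
  have hseg : dist u p + dist p v = dist u v := dist_add_dist_of_mem_segment hp
  have h1 : dist w u - rw ≤ ru := by
    have := dist_triangle w p u
    have hvp : dist v p = dist p v := dist_comm _ _
    have hvu : dist v u = dist u v := dist_comm _ _
    have hpu : dist p u = dist u p := dist_comm _ _
    linarith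
  exact ⟨h1, by rw [dist_comm]; linarith⟩
end

section
/- Suppose v ∈ S_i (hop-distance i from s), u is a weighted nearest neighbor of v in S_{i−1}, and w is a site whose weighted Voronoi region intersects the open segment uv at a point p where u, v, w are not collinear. Then w ∉ S_{i−1}. -/
/-- If `v ∈ S_i` (`i ≥ 1`), `u` is a weighted nearest neighbor of `v` in
`S_{i−1}`, and `w` is a site whose weighted Voronoi region contains a point `p`
of the open segment `uv` with `u, v, w` not collinear, then `w ∉ S_{i−1}`. -/
theorem stmt_6 {V : Type*} [Fintype V]
    (pos : V → EuclideanSpace ℝ (Fin 2)) (hinj : Function.Injective pos)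
    (r : V → ℝ) (hr : ∀ x, 0 ≤ r x)
    (G : SimpleGraph V)
    (hG : ∀ x y, G.Adj x y ↔ x ≠ y ∧ dist (pos x) (pos y) ≤ r x + r y)
    (s : V) (i : ℕ) (hi : 1 ≤ i) (v u w : V)
    (hv : G.Reachable s v ∧ G.dist s v = i)
    (hu : G.Reachable s u ∧ G.dist s u = i - 1)
    (hmin : ∀ x : V, (G.Reachable s x ∧ G.dist s x = i - 1) →
      dist (pos u) (pos v) - r u ≤ dist (pos x) (pos v) - r x)
    (p : EuclideanSpace ℝ (Fin 2))
    (hpseg : p ∈ openSegment ℝ (pos u) (pos v))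
    (hpR : ∀ x : V, dist (pos w) p - r w ≤ dist (pos x) p - r x)
    (hcol : ¬ Collinear ℝ ({pos u, pos v, pos w} : Set (EuclideanSpace ℝ (Fin 2)))) :
    ¬ (G.Reachable s w ∧ G.dist s w = i - 1) := by
  intro hw
  have huv : pos u ≠ pos v := by
    intro h
    have := hinj h
    subst this
    omega
  have hpv : p ≠ pos v := by
    intro h
    rw [h, right_mem_openSegment_iff] at hpseg
    exact huv hpseg
  have h1 := hmin w hw
  have h2 := hpR u
  have hseg : p ∈ segment ℝ (pos u) (pos v) := openSegment_subset_segment _ _ _ hpseg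
  have hsum : dist (pos u) p + dist p (pos v) = dist (pos u) (pos v) :=
    dist_add_dist_of_mem_segment hseg
  have htri : dist (pos w) (pos v) ≤ dist (pos w) p + dist p (pos v) := dist_triangle _ _ _
  have heq : dist (pos w) p + dist p (pos v) = dist (pos w) (pos v) := by linarith
  have hwbtw : Wbtw ℝ (pos w) p (pos v) := dist_add_dist_eq_iff.mp heq
  have hcwpv : Collinear ℝ ({pos w, p, pos v} : Set _) := hwbtw.collinear
  have hwline : pos w ∈ line[ℝ, p, pos v] :=
    hcwpv.mem_affineSpan_of_mem_of_ne (by simp) (by simp) (by simp) hpv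
  have hpline : p ∈ line[ℝ, pos u, pos v] := by
    exact (mem_segment_iff_wbtw.mp hseg).mem_affineSpan
  have hle : line[ℝ, p, pos v] ≤ line[ℝ, pos u, pos v] := by
    apply affineSpan_le.2
    intro x hx
    rcases hx with h | h
    · exact h ▸ hpline
    · simp at h; exact h ▸ right_mem_affineSpan_pair ℝ _ _
  have : Collinear ℝ ({pos w, pos u, pos v} : Set _) :=
    collinear_insert_of_mem_affineSpan_pair (hle hwline)
  apply hcol
  have : ({pos u, pos v, pos w} : Set _) = {pos w, pos u, pos v} := by
    ext x; simp; tauto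
  rw [this]
  assumption
end

section
/- If p lies in the weighted Voronoi region R(w) and p is on the segment uv, then |uw| − r_w ≤ |uv| − r_v and |vw| − r_w ≤ |uv| − r_u; i.e., d_w(u) ≤ d_v(u) and d_w(v) ≤ d_u(v). -/
/-- If `p` lies in the weighted Voronoi region `R(w)` (so `d_w(p) ≤ d_v(p)` and
`d_w(p) ≤ d_u(p)`) and `p` is on the segment `uv`, then `d_w(u) ≤ d_v(u)` and
`d_w(v) ≤ d_u(v)`. -/
theorem stmt_19 (u v w p : EuclideanSpace ℝ (Fin 2)) (ru rv rw : ℝ)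
    (hp : p ∈ segment ℝ u v)
    (hv : dist w p - rw ≤ dist v p - rv)
    (hu : dist w p - rw ≤ dist u p - ru) :
    dist u w - rw ≤ dist u v - rv ∧ dist v w - rw ≤ dist u v - ru := by
  have hsum : dist u p + dist p v = dist u v := dist_add_dist_of_mem_segment hp
  have t1 : dist u w ≤ dist u p + dist p w := dist_triangle u p w
  have t2 : dist v w ≤ dist v p + dist p w := dist_triangle v p w
  have e1 : dist p w = dist w p := dist_comm p w
  have e2 : dist p v = dist v p := dist_comm p v
  constructor <;> linarith
end
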